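/- arXiv:0712.0124 — 3 statements merged into one kernel-verified Lean document; each statement's English description precedes it below -/
import Mathlib

section
/- Let F be a nonnegative integrable function on R^N with mass ρ > 0, zero momentum, energy E = ∫ F|v|² dv, satisfying the energy balance (1+α) b₁ ∫∫ F F_* |u|³ dv dv_* = 2 N ρ², where b₁ > 0 and α ∈ [0,1]. Then E ≤ ρ (2N/b₁)^{2/3}. (Upper bound on the energy of the stationary solution.) -/
open MeasureTheory Real
open scoped ENNReal

noncomputable section

lemma cube_upper_aux {H : Type*} [NormedAddCommGroup H] (v w : H) :
    ‖v - w‖^3 ≤ 4*(‖v‖^3 + ‖w‖^3) := by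
  have h := norm_sub_le v w
  have h3 : ‖v - w‖^3 ≤ (‖v‖ + ‖w‖)^3 := pow_le_pow_left₀ (norm_nonneg _) h 3
  nlinarith [norm_nonneg v, norm_nonneg w,
    mul_nonneg (add_nonneg (norm_nonneg v) (norm_nonneg w)) (sq_nonneg (‖v‖ - ‖w‖))]

lemma cube_lower_aux {H : Type*} [NormedAddCommGroup H] [InnerProductSpace ℝ H] (v w : H) :
    ‖v‖^3 - 3*‖v‖*(inner ℝ v w : ℝ) ≤ ‖v - w‖^3 := by
  have h1 : (inner ℝ v (v - w) : ℝ) ≤ ‖v‖ * ‖v - w‖ := real_inner_le_norm v (v - w)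
  have h2 : (inner ℝ v w : ℝ) = ‖v‖^2 - inner ℝ v (v - w) := by
    rw [inner_sub_right, real_inner_self_eq_norm_sq]; ring
  rw [h2]
  nlinarith [mul_le_mul_of_nonneg_left h1 (by positivity : (0:ℝ) ≤ 3*‖v‖),
    mul_nonneg (sq_nonneg (‖v - w‖ - ‖v‖)) (by positivity : (0:ℝ) ≤ ‖v - w‖ + 2*‖v‖)]

/-- Upper bound on the energy of the stationary solution. -/
theorem energy_upper_bound
    (N : ℕ) (hN : 2 ≤ N) (ρ b₁ α : ℝ) (hρ : 0 < ρ) (hb₁ : 0 < b₁)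
    (hα : α ∈ Set.Icc (0:ℝ) 1)
    (F : EuclideanSpace ℝ (Fin N) → ℝ)
    (hF0 : ∀ v, 0 ≤ F v)
    (hFint : Integrable F)
    (hmass : ∫ v, F v = ρ)
    (hmom : ∫ v, F v • v = (0 : EuclideanSpace ℝ (Fin N)))
    (hM3 : Integrable (fun v => F v * ‖v‖^3))
    (E : ℝ) (hE : E = ∫ v, F v * ‖v‖^2)
    (hbalance : (1 + α) * b₁ * ∫ v, ∫ w, F v * F w * ‖v - w‖^3
        = 2 * N * ρ^2) :
    E ≤ ρ * (2 * N / b₁) ^ ((2:ℝ)/3) := by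
  set M3v : ℝ := ∫ v, F v * ‖v‖^3 with hM3v
  set D : ℝ := ∫ v, ∫ w, F v * F w * ‖v - w‖^3 with hD
  -- Integrability of the momentum integrand
  have hFw_smul : Integrable (fun w => F w • w) := by
    apply Integrable.mono' (hFint.add hM3) (hFint.1.smul aestronglyMeasurable_id)
    filter_upwards with w
    simp only [Pi.add_apply, Pi.smul_apply', id_eq]
    rw [norm_smul, Real.norm_of_nonneg (hF0 w)]
    have hx : (0:ℝ) ≤ ‖w‖^3 + 1 - ‖w‖ := by
      nlinarith [mul_nonneg (norm_nonneg w) (sq_nonneg (‖w‖ - 1)), sq_nonneg (2*‖w‖ - 1)]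
    nlinarith [mul_nonneg (hF0 w) hx]
  -- Pointwise Jensen lower bound
  have key : ∀ v : EuclideanSpace ℝ (Fin N),
      ρ * ‖v‖^3 ≤ ∫ w, F w * ‖v - w‖^3 := by
    intro v
    have hint1 : Integrable (fun w => F w * ‖v - w‖^3) := by
      apply Integrable.mono' (((hFint.mul_const (‖v‖^3)).add hM3).const_mul 4)
        (hFint.1.mul ((continuous_const.sub continuous_id).norm.pow 3).aestronglyMeasurable)
      filter_upwards with w
      simp only [Pi.add_apply, Pi.mul_apply, Pi.pow_apply, Pi.sub_apply, id_eq]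
      rw [Real.norm_of_nonneg (mul_nonneg (hF0 w) (by positivity : (0:ℝ) ≤ ‖v - w‖^3))]
      calc F w * ‖v - w‖^3 ≤ F w * (4*(‖v‖^3 + ‖w‖^3)) :=
            mul_le_mul_of_nonneg_left (cube_upper_aux v w) (hF0 w)
        _ = 4 * (F w * ‖v‖^3 + F w * ‖w‖^3) := by ring
    have hrw : (fun w : EuclideanSpace ℝ (Fin N) => F w * (‖v‖^3 - 3*‖v‖*(inner ℝ v w : ℝ)))
        = fun w => ‖v‖^3 * F w - (3*‖v‖) * (inner ℝ v (F w • w) : ℝ) := by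
      funext w; rw [real_inner_smul_right]; ring
    have hint2 : Integrable (fun w => F w * (‖v‖^3 - 3*‖v‖*(inner ℝ v w : ℝ))) := by
      rw [hrw]
      exact (hFint.const_mul _).sub ((hFw_smul.const_inner v).const_mul _)
    have hcalc : ∫ w, F w * (‖v‖^3 - 3*‖v‖*(inner ℝ v w : ℝ)) = ρ * ‖v‖^3 := by
      rw [hrw, integral_sub (hFint.const_mul _) ((hFw_smul.const_inner v).const_mul _),
        integral_const_mul, integral_const_mul, hmass, integral_inner hFw_smul, hmom,
        inner_zero_right]
      ring
    have hmono := integral_mono hint2 hint1 (fun w =>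
      mul_le_mul_of_nonneg_left (cube_lower_aux v w) (hF0 w))
    linarith [hmono, hcalc.ge, hcalc.le]
  -- Integrability on the product space
  have hGprod : Integrable (fun p : EuclideanSpace ℝ (Fin N) × EuclideanSpace ℝ (Fin N) =>
      F p.1 * F p.2 * ‖p.1 - p.2‖^3) (volume.prod volume) := by
    apply Integrable.mono' (((hM3.mul_prod hFint).add (hFint.mul_prod hM3)).const_mul 4)
      ((hFint.1.comp_fst.mul hFint.1.comp_snd).mul
        ((continuous_fst.sub continuous_snd).norm.pow 3).aestronglyMeasurable)
    filter_upwards with p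
    simp only [Pi.add_apply, Pi.mul_apply, Pi.pow_apply, Pi.sub_apply]
    rw [Real.norm_of_nonneg (mul_nonneg (mul_nonneg (hF0 _) (hF0 _)) (by positivity))]
    calc F p.1 * F p.2 * ‖p.1 - p.2‖^3
        ≤ F p.1 * F p.2 * (4*(‖p.1‖^3 + ‖p.2‖^3)) :=
          mul_le_mul_of_nonneg_left (cube_upper_aux p.1 p.2)
            (mul_nonneg (hF0 _) (hF0 _))
      _ = 4 * ((F p.1 * ‖p.1‖^3) * F p.2 + F p.1 * (F p.2 * ‖p.2‖^3)) := by ring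
  have hGouter : Integrable (fun v => ∫ w, F v * F w * ‖v - w‖^3) := by
    simpa using hGprod.integral_prod_left
  -- Outer monotonicity: ρ * M3v ≤ D
  have hDge : ρ * M3v ≤ D := by
    have houter : ∫ v, ρ * (F v * ‖v‖^3) ≤ D := by
      refine integral_mono_of_nonneg
        (Filter.Eventually.of_forall fun v =>
          mul_nonneg hρ.le (mul_nonneg (hF0 v) (by positivity))) hGouter
        (Filter.Eventually.of_forall fun v => ?_)
      calc ρ * (F v * ‖v‖^3) = F v * (ρ * ‖v‖^3) := by ring
        _ ≤ F v * ∫ w, F w * ‖v - w‖^3 := mul_le_mul_of_nonneg_left (key v) (hF0 v)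
        _ = ∫ w, F v * (F w * ‖v - w‖^3) := (integral_const_mul _ _).symm
        _ = ∫ w, F v * F w * ‖v - w‖^3 := by simp only [mul_assoc]
    rwa [integral_const_mul] at houter
  have hM3nn : 0 ≤ M3v := integral_nonneg fun v => mul_nonneg (hF0 v) (by positivity)
  have hDnn : 0 ≤ D := le_trans (by positivity) hDge
  -- From the balance: M3v ≤ 2Nρ/b₁
  have hM3le : M3v ≤ 2*N*ρ/b₁ := by
    rw [le_div_iff₀ hb₁]
    have h2 : b₁ * D ≤ (1 + α) * b₁ * D := by nlinarith [mul_nonneg hb₁.le hDnn, hα.1]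
    have h3 : b₁ * (ρ * M3v) ≤ 2*N*ρ^2 := by
      calc b₁ * (ρ * M3v) ≤ b₁ * D := mul_le_mul_of_nonneg_left hDge hb₁.le
        _ ≤ (1 + α) * b₁ * D := h2
        _ = 2*N*ρ^2 := hbalance
    nlinarith [h3, hρ]
  -- Hölder: E ≤ ρ^{1/3} M3v^{2/3}
  set f : EuclideanSpace ℝ (Fin N) → ℝ := fun v => (F v) ^ ((1:ℝ)/3) with hf
  set g : EuclideanSpace ℝ (Fin N) → ℝ := fun v => (F v) ^ ((2:ℝ)/3) * ‖v‖^2 with hg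
  have hf3 : ∀ v, f v ^ (3:ℝ) = F v := by
    intro v
    simp only [hf]
    rw [← Real.rpow_mul (hF0 v), show ((1:ℝ)/3*3 : ℝ) = 1 by norm_num, Real.rpow_one]
  have hg32 : ∀ v, g v ^ ((3:ℝ)/2) = F v * ‖v‖^3 := by
    intro v
    have h1 : ((F v) ^ ((2:ℝ)/3)) ^ ((3:ℝ)/2) = F v := by
      rw [← Real.rpow_mul (hF0 v), show ((2:ℝ)/3*(3/2) : ℝ) = 1 by norm_num, Real.rpow_one]
    have h2 : ((‖v‖^2 : ℝ)) ^ ((3:ℝ)/2) = ‖v‖^3 := by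
      rw [← Real.rpow_natCast ‖v‖ 2, ← Real.rpow_mul (norm_nonneg v),
        ← Real.rpow_natCast ‖v‖ 3]
      norm_num
    simp only [hg]
    rw [Real.mul_rpow (Real.rpow_nonneg (hF0 v) _) (by positivity), h1, h2]
  have hfg : ∀ v, F v * ‖v‖^2 = f v * g v := by
    intro v
    simp only [hf, hg]
    rw [← mul_assoc, ← Real.rpow_add' (hF0 v) (by norm_num : (1:ℝ)/3 + 2/3 ≠ 0),
      show ((1:ℝ)/3 + 2/3 : ℝ) = 1 by norm_num, Real.rpow_one]
  have hF1 : MemLp F 1 (volume : Measure (EuclideanSpace ℝ (Fin N))) :=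
    memLp_one_iff_integrable.2 hFint
  have hM1 : MemLp (fun v => F v * ‖v‖^3) 1
      (volume : Measure (EuclideanSpace ℝ (Fin N))) := memLp_one_iff_integrable.2 hM3
  have hexp3 : (1 : ℝ≥0∞) / ENNReal.ofReal (1/3) = ENNReal.ofReal 3 := by
    rw [show (1/3 : ℝ) = (3:ℝ)⁻¹ by norm_num, ENNReal.ofReal_inv_of_pos (by norm_num),
      one_div, inv_inv]
  have hexp32 : (1 : ℝ≥0∞) / ENNReal.ofReal (2/3) = ENNReal.ofReal (3/2) := by
    rw [show (2/3 : ℝ) = ((3:ℝ)/2)⁻¹ by norm_num, ENNReal.ofReal_inv_of_pos (by norm_num),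
      one_div, inv_inv]
  have hfmem : MemLp f (ENNReal.ofReal 3) volume := by
    have h := hF1.norm_rpow_div (ENNReal.ofReal (1/3))
    rw [hexp3] at h
    have heq : (fun v => ‖F v‖ ^ (ENNReal.ofReal (1/3 : ℝ)).toReal) = f := by
      funext v; rw [ENNReal.toReal_ofReal (by norm_num), Real.norm_of_nonneg (hF0 v), hf]
    rwa [heq] at h
  have hgmem : MemLp g (ENNReal.ofReal (3/2)) volume := by
    have h := hM1.norm_rpow_div (ENNReal.ofReal (2/3))
    rw [hexp32] at h
    have heq : (fun v => ‖F v * ‖v‖^3‖ ^ (ENNReal.ofReal (2/3 : ℝ)).toReal) = g := by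
      funext v
      rw [ENNReal.toReal_ofReal (by norm_num),
        Real.norm_of_nonneg (mul_nonneg (hF0 v) (by positivity)),
        Real.mul_rpow (hF0 v) (by positivity), hg]
      congr 1
      rw [← Real.rpow_natCast ‖v‖ 3, ← Real.rpow_mul (norm_nonneg v),
        ← Real.rpow_natCast ‖v‖ 2]
      norm_num
    rwa [heq] at h
  have hconj : (3:ℝ).HolderConjugate (3/2) := (Real.holderConjugate_iff_eq_conjExponent (by norm_num)).2 (by norm_num)
  have hholder := MeasureTheory.integral_mul_le_Lp_mul_Lq_of_nonneg hconj
    (Filter.Eventually.of_forall fun v => Real.rpow_nonneg (hF0 v) _)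
    (Filter.Eventually.of_forall fun v =>
      mul_nonneg (Real.rpow_nonneg (hF0 v) _) (by positivity)) hfmem hgmem
  have hlhs : ∫ v, f v * g v = E := by
    rw [hE]; exact integral_congr_ae (Filter.Eventually.of_forall fun v => (hfg v).symm)
  have hr1 : ∫ v, f v ^ (3:ℝ) = ρ := by
    rw [← hmass]; exact integral_congr_ae (Filter.Eventually.of_forall fun v => hf3 v)
  have hr2 : ∫ v, g v ^ ((3:ℝ)/2) = M3v := by
    rw [hM3v]; exact integral_congr_ae (Filter.Eventually.of_forall fun v => hg32 v)
  rw [hlhs, hr1, hr2] at hholder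
  have hEle : E ≤ ρ ^ ((1:ℝ)/3) * M3v ^ ((2:ℝ)/3) := by
    convert hholder using 3 <;> norm_num
  -- Final arithmetic
  have hstep : M3v ^ ((2:ℝ)/3) ≤ (2*N*ρ/b₁) ^ ((2:ℝ)/3) :=
    Real.rpow_le_rpow hM3nn hM3le (by norm_num)
  have hfinal : ρ ^ ((1:ℝ)/3) * (2*N*ρ/b₁) ^ ((2:ℝ)/3) = ρ * (2*N/b₁) ^ ((2:ℝ)/3) := by
    have h1 : 2*N*ρ/b₁ = ρ * (2*N/b₁) := by ring
    rw [h1, Real.mul_rpow hρ.le (by positivity), ← mul_assoc,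
      ← Real.rpow_add hρ]
    norm_num
  calc E ≤ ρ ^ ((1:ℝ)/3) * M3v ^ ((2:ℝ)/3) := hEle
    _ ≤ ρ ^ ((1:ℝ)/3) * (2*N*ρ/b₁) ^ ((2:ℝ)/3) :=
        mul_le_mul_of_nonneg_left hstep (by positivity)
    _ = ρ * (2*N/b₁) ^ ((2:ℝ)/3) := hfinal
end
end

section
/- Let M_θ(v) = ρ(2πθ)^{−N/2} e^{−|v|²/(2θ)} be the centered Maxwellian of mass ρ and temperature θ on R^N. Then for θ, θ' in a compact interval [c, C] ⊂ (0,∞), ‖M_θ − M_{θ'}‖_{L²(R^N)}² ≤ K ρ² |θ^{3/2} − θ'^{3/2}| for a constant K depending only on N, c, C. (Lipschitz dependence of the Maxwellian on θ^{3/2} in L².) -/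
open MeasureTheory Real

noncomputable section


lemma rpow_lip {a b p L : ℝ} (ha : 0 < a)
    (hL : ∀ t ∈ Set.Icc a b, |p| * t ^ (p - 1) ≤ L) :
    ∀ x ∈ Set.Icc a b, ∀ y ∈ Set.Icc a b, |x ^ p - y ^ p| ≤ L * |x - y| := by
  intro x hx y hy
  have key := Convex.norm_image_sub_le_of_norm_hasDerivWithin_le
    (f := fun t : ℝ => t ^ p) (f' := fun t : ℝ => p * t ^ (p - 1))
    (C := L) (s := Set.Icc a b)
    (fun t ht => (Real.hasDerivAt_rpow_const
      (Or.inl (ne_of_gt (lt_of_lt_of_le ha ht.1)))).hasDerivWithinAt)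
    (fun t ht => by
      have ht0 : 0 < t := lt_of_lt_of_le ha ht.1
      have : ‖p * t ^ (p - 1)‖ = |p| * t ^ (p - 1) := by
        rw [Real.norm_eq_abs, abs_mul, abs_of_pos (Real.rpow_pos_of_pos ht0 _)]
      rw [this]; exact hL t ht)
    (convex_Icc a b) hy hx
  simpa [Real.norm_eq_abs] using key


lemma gauss_int (N : ℕ) {b : ℝ} (hb : 0 < b) :
    ∫ v : EuclideanSpace ℝ (Fin N), rexp (-b * ‖v‖^2) = (π / b) ^ ((N:ℝ) / 2) := by
  rw [GaussianFourier.integral_rexp_neg_mul_sq_norm hb]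
  simp

lemma gauss_integrable (N : ℕ) {b : ℝ} (hb : 0 < b) :
    Integrable (fun v : EuclideanSpace ℝ (Fin N) => rexp (-b * ‖v‖^2)) := by
  have h := (GaussianFourier.integrable_cexp_neg_mul_sq_norm_add
    (show (0:ℝ) < (b:ℂ).re by simpa using hb) 0 (0 : EuclideanSpace ℝ (Fin N))).re
  simpa [← Complex.ofReal_pow, ← Complex.ofReal_mul, ← Complex.ofReal_neg,
    Complex.exp_ofReal_re] using h

lemma key_integral (N : ℕ) (ρ θ θ' : ℝ) (hθ : 0 < θ) (hθ' : 0 < θ') :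
    (∫ v : EuclideanSpace ℝ (Fin N),
        (ρ * (2 * π * θ) ^ (-(N:ℝ)/2) * Real.exp (-‖v‖^2 / (2*θ))
          - ρ * (2 * π * θ') ^ (-(N:ℝ)/2) * Real.exp (-‖v‖^2 / (2*θ')))^2)
      = ρ^2 * (4*π) ^ (-(N:ℝ)/2) *
          (θ ^ (-(N:ℝ)/2) + θ' ^ (-(N:ℝ)/2) - 2 * ((θ+θ')/2) ^ (-(N:ℝ)/2)) := by
  have hπ := Real.pi_pos
  set e : ℝ := -(N:ℝ)/2 with he
  set A : ℝ := ρ * (2 * π * θ) ^ e with hA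
  set B : ℝ := ρ * (2 * π * θ') ^ e with hB
  have hb1 : (0:ℝ) < 1/θ := by positivity
  have hb2 : (0:ℝ) < 1/θ' := by positivity
  have hb3 : (0:ℝ) < (θ+θ')/(2*θ*θ') := by positivity
  have hptwise : ∀ v : EuclideanSpace ℝ (Fin N),
      (A * Real.exp (-‖v‖^2 / (2*θ)) - B * Real.exp (-‖v‖^2 / (2*θ')))^2
      = A^2 * rexp (-(1/θ) * ‖v‖^2) + B^2 * rexp (-(1/θ') * ‖v‖^2)
        - 2*A*B * rexp (-((θ+θ')/(2*θ*θ')) * ‖v‖^2) := by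
    intro v
    set x : ℝ := ‖v‖^2
    have e1 : rexp (-(1/θ) * x) = rexp (-x/(2*θ)) * rexp (-x/(2*θ)) := by
      rw [← Real.exp_add]; congr 1; field_simp; ring
    have e2 : rexp (-(1/θ') * x) = rexp (-x/(2*θ')) * rexp (-x/(2*θ')) := by
      rw [← Real.exp_add]; congr 1; field_simp; ring
    have e3 : rexp (-((θ+θ')/(2*θ*θ')) * x) = rexp (-x/(2*θ)) * rexp (-x/(2*θ')) := by
      rw [← Real.exp_add]; congr 1; field_simp; ring
    rw [e1, e2, e3]; ring
  simp only [hptwise]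
  have hf : Integrable (fun v : EuclideanSpace ℝ (Fin N) =>
      A ^ 2 * rexp (-(1/θ) * ‖v‖^2) + B ^ 2 * rexp (-(1/θ') * ‖v‖^2)) := by
    exact ((gauss_integrable N hb1).const_mul _).add ((gauss_integrable N hb2).const_mul _)
  have hg : Integrable (fun v : EuclideanSpace ℝ (Fin N) =>
      2*A*B * rexp (-((θ+θ')/(2*θ*θ')) * ‖v‖^2)) := (gauss_integrable N hb3).const_mul _
  rw [integral_sub hf hg,
      integral_add ((gauss_integrable N hb1).const_mul _) ((gauss_integrable N hb2).const_mul _),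
      MeasureTheory.integral_const_mul, MeasureTheory.integral_const_mul, MeasureTheory.integral_const_mul,
      gauss_int N hb1, gauss_int N hb2, gauss_int N hb3]
  -- now pure algebra
  have hNe : ((N:ℝ)/2) = -e := by rw [he]; ring
  have claim1 : ∀ t : ℝ, 0 < t →
      (ρ * (2 * π * t) ^ e)^2 * (π / (1/t)) ^ ((N:ℝ)/2) = ρ^2 * (4*π)^e * t^e := by
    intro t ht
    have h1 : π / (1/t) = π * t := by field_simp
    have l1 : Real.log (2*π*t) = Real.log 2 + Real.log π + Real.log t := by
      rw [Real.log_mul (by positivity) (ne_of_gt ht), Real.log_mul (by norm_num) (ne_of_gt hπ)]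
    have l2 : Real.log (π*t) = Real.log π + Real.log t := by
      rw [Real.log_mul (ne_of_gt hπ) (ne_of_gt ht)]
    have l3 : Real.log (4*π) = 2*Real.log 2 + Real.log π := by
      rw [Real.log_mul (by norm_num) (ne_of_gt hπ), show (4:ℝ) = 2^2 by norm_num,
        Real.log_pow]
      push_cast; ring
    rw [h1, mul_pow, ← Real.rpow_natCast ((2*π*t)^e) 2, ← Real.rpow_mul (by positivity),
        Real.rpow_def_of_pos (by positivity : (0:ℝ) < 2*π*t),
        Real.rpow_def_of_pos (by positivity : (0:ℝ) < π*t),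
        Real.rpow_def_of_pos (by positivity : (0:ℝ) < 4*π),
        Real.rpow_def_of_pos ht, l1, l2, l3]
    simp only [mul_assoc, ← Real.exp_add]
    congr 1
    rw [he]; push_cast; ring
  have claim3 :
      (ρ * (2 * π * θ) ^ e) * (ρ * (2 * π * θ') ^ e) * (π / ((θ+θ')/(2*θ*θ'))) ^ ((N:ℝ)/2)
        = ρ^2 * (4*π)^e * ((θ+θ')/2)^e := by
    have h1 : π / ((θ+θ')/(2*θ*θ')) = 2*π*θ*θ' / (θ+θ') := by
      field_simp
    have l1 : Real.log (2*π*θ*θ'/(θ+θ'))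
        = Real.log 2 + Real.log π + Real.log θ + Real.log θ' - Real.log (θ+θ') := by
      rw [Real.log_div (by positivity) (by positivity),
          Real.log_mul (by positivity) (ne_of_gt hθ'),
          Real.log_mul (by positivity) (ne_of_gt hθ),
          Real.log_mul (by norm_num) (ne_of_gt hπ)]
    have l2 : Real.log (2*π*θ) = Real.log 2 + Real.log π + Real.log θ := by
      rw [Real.log_mul (by positivity) (ne_of_gt hθ), Real.log_mul (by norm_num) (ne_of_gt hπ)]
    have l2' : Real.log (2*π*θ') = Real.log 2 + Real.log π + Real.log θ' := by
      rw [Real.log_mul (by positivity) (ne_of_gt hθ'), Real.log_mul (by norm_num) (ne_of_gt hπ)]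
    have l3 : Real.log (4*π) = 2*Real.log 2 + Real.log π := by
      rw [Real.log_mul (by norm_num) (ne_of_gt hπ), show (4:ℝ) = 2^2 by norm_num,
        Real.log_pow]
      push_cast; ring
    have l4 : Real.log ((θ+θ')/2) = Real.log (θ+θ') - Real.log 2 := by
      rw [Real.log_div (by positivity) (by norm_num)]
    rw [h1, Real.rpow_def_of_pos (by positivity : (0:ℝ) < 2*π*θ),
        Real.rpow_def_of_pos (by positivity : (0:ℝ) < 2*π*θ'),
        Real.rpow_def_of_pos (by positivity : (0:ℝ) < 2*π*θ*θ'/(θ+θ')),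
        Real.rpow_def_of_pos (by positivity : (0:ℝ) < 4*π),
        Real.rpow_def_of_pos (by positivity : (0:ℝ) < (θ+θ')/2),
        l1, l2, l2', l3, l4]
    rw [show ρ * rexp ((Real.log 2 + Real.log π + Real.log θ) * e)
          * (ρ * rexp ((Real.log 2 + Real.log π + Real.log θ') * e))
          * rexp ((Real.log 2 + Real.log π + Real.log θ + Real.log θ' - Real.log (θ+θ'))
              * ((N:ℝ)/2))
        = ρ^2 * rexp ((Real.log 2 + Real.log π + Real.log θ) * e
            + ((Real.log 2 + Real.log π + Real.log θ') * e
            + (Real.log 2 + Real.log π + Real.log θ + Real.log θ' - Real.log (θ+θ'))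
              * ((N:ℝ)/2))) from by
      rw [Real.exp_add, Real.exp_add]; ring]
    rw [show ρ^2 * rexp ((2*Real.log 2 + Real.log π) * e)
          * rexp ((Real.log (θ+θ') - Real.log 2) * e)
        = ρ^2 * rexp ((2*Real.log 2 + Real.log π) * e
            + (Real.log (θ+θ') - Real.log 2) * e) from by
      rw [Real.exp_add]; ring]
    congr 1
    rw [he]; push_cast; ring
  rw [show (ρ * (2 * π * θ) ^ e)^2 * (π / (1/θ)) ^ ((N:ℝ)/2) = ρ^2 * (4*π)^e * θ^e
        from claim1 θ hθ,
      show (ρ * (2 * π * θ') ^ e)^2 * (π / (1/θ')) ^ ((N:ℝ)/2) = ρ^2 * (4*π)^e * θ'^e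
        from claim1 θ' hθ']
  linear_combination (-2 : ℝ) * claim3

/-- Lipschitz dependence of the centered Maxwellian on θ^{3/2} in L². -/
theorem maxwellian_L2_lipschitz_in_temperature
    (N : ℕ) (hN : 2 ≤ N) (c C : ℝ) (hc : 0 < c) (hcC : c < C) :
    ∃ K : ℝ, 0 < K ∧ ∀ ρ : ℝ, 0 < ρ → ∀ θ θ' : ℝ,
      θ ∈ Set.Icc c C → θ' ∈ Set.Icc c C →
      (∫ v : EuclideanSpace ℝ (Fin N),
          (ρ * (2 * π * θ) ^ (-(N:ℝ)/2) * Real.exp (-‖v‖^2 / (2*θ))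
            - ρ * (2 * π * θ') ^ (-(N:ℝ)/2) * Real.exp (-‖v‖^2 / (2*θ')))^2)
        ≤ K * ρ^2 * |θ ^ ((3:ℝ)/2) - θ' ^ ((3:ℝ)/2)| := by
  have hπ := Real.pi_pos
  have hN0 : (0:ℝ) < (N:ℝ) := by exact_mod_cast Nat.lt_of_lt_of_le Nat.zero_lt_two hN
  set e : ℝ := -(N:ℝ)/2 with he
  have heneg : e ≤ 0 := by rw [he]; nlinarith
  set L1 : ℝ := ((N:ℝ)/2) * c ^ (e - 1) with hL1def
  set L2 : ℝ := (2/3 : ℝ) * (c ^ ((3:ℝ)/2)) ^ ((2:ℝ)/3 - 1) with hL2def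
  have hL1 : 0 < L1 := by
    rw [hL1def]
    have := Real.rpow_pos_of_pos hc (e - 1)
    positivity
  have hL2 : 0 < L2 := by
    rw [hL2def]
    have := Real.rpow_pos_of_pos (Real.rpow_pos_of_pos hc ((3:ℝ)/2)) ((2:ℝ)/3 - 1)
    positivity
  refine ⟨(4*π) ^ e * L1 * L2, by positivity, ?_⟩
  intro ρ hρ θ θ' hθ hθ' 
  have hθ0 : 0 < θ := lt_of_lt_of_le hc hθ.1
  have hθ'0 : 0 < θ' := lt_of_lt_of_le hc hθ'.1
  rw [key_integral N ρ θ θ' hθ0 hθ'0]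
  -- Lipschitz for t ^ e on [c, C]
  have lip1 := rpow_lip (a := c) (b := C) (p := e) (L := L1) hc (by
    intro t ht
    have ht0 : 0 < t := lt_of_lt_of_le hc ht.1
    have h1 : |e| = (N:ℝ)/2 := by rw [abs_of_nonpos heneg, he]; ring
    have h2 : t ^ (e - 1) ≤ c ^ (e - 1) :=
      Real.rpow_le_rpow_of_nonpos hc ht.1 (by linarith)
    rw [h1, hL1def]
    have : (0:ℝ) ≤ (N:ℝ)/2 := by positivity
    exact mul_le_mul_of_nonneg_left h2 this)
  -- Lipschitz for t ^ (2/3) on [c^{3/2}, C^{3/2}]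
  have lip2 := rpow_lip (a := c ^ ((3:ℝ)/2)) (b := C ^ ((3:ℝ)/2)) (p := (2:ℝ)/3) (L := L2)
    (Real.rpow_pos_of_pos hc _) (by
      intro t ht
      have ht0 : 0 < t := lt_of_lt_of_le (Real.rpow_pos_of_pos hc _) ht.1
      have h2 : t ^ ((2:ℝ)/3 - 1) ≤ (c ^ ((3:ℝ)/2)) ^ ((2:ℝ)/3 - 1) :=
        Real.rpow_le_rpow_of_nonpos (Real.rpow_pos_of_pos hc _) ht.1 (by norm_num)
      rw [hL2def, show |(2:ℝ)/3| = 2/3 by norm_num]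
      exact mul_le_mul_of_nonneg_left h2 (by norm_num))
  set m : ℝ := (θ + θ')/2 with hm
  have hmIcc : m ∈ Set.Icc c C := ⟨by rw [hm]; cases hθ; cases hθ'; linarith,
    by rw [hm]; cases hθ; cases hθ'; linarith⟩
  have h1 : |θ ^ e - m ^ e| ≤ L1 * |θ - m| := lip1 θ hθ m hmIcc
  have h2 : |θ' ^ e - m ^ e| ≤ L1 * |θ' - m| := lip1 θ' hθ' m hmIcc
  have hm1 : |θ - m| = |θ - θ'| / 2 := by
    rw [hm, show θ - (θ + θ')/2 = (θ - θ')/2 by ring, abs_div]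
    norm_num
  have hm2 : |θ' - m| = |θ - θ'| / 2 := by
    rw [hm, show θ' - (θ + θ')/2 = -((θ - θ')/2) by ring, abs_neg, abs_div]
    norm_num
  have hE : θ ^ e + θ' ^ e - 2 * m ^ e ≤ L1 * |θ - θ'| := by
    have a1 : θ ^ e - m ^ e ≤ |θ ^ e - m ^ e| := le_abs_self _
    have a2 : θ' ^ e - m ^ e ≤ |θ' ^ e - m ^ e| := le_abs_self _
    rw [hm1] at h1; rw [hm2] at h2
    linarith
  -- |θ - θ'| ≤ L2 * |θ^{3/2} - θ'^{3/2}|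
  have mem1 : θ ^ ((3:ℝ)/2) ∈ Set.Icc (c ^ ((3:ℝ)/2)) (C ^ ((3:ℝ)/2)) :=
    ⟨Real.rpow_le_rpow hc.le hθ.1 (by norm_num),
     Real.rpow_le_rpow hθ0.le hθ.2 (by norm_num)⟩
  have mem2 : θ' ^ ((3:ℝ)/2) ∈ Set.Icc (c ^ ((3:ℝ)/2)) (C ^ ((3:ℝ)/2)) :=
    ⟨Real.rpow_le_rpow hc.le hθ'.1 (by norm_num),
     Real.rpow_le_rpow hθ'0.le hθ'.2 (by norm_num)⟩
  have h3 := lip2 _ mem1 _ mem2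
  rw [← Real.rpow_mul hθ0.le, ← Real.rpow_mul hθ'0.le,
      show (3:ℝ)/2 * ((2:ℝ)/3) = 1 by norm_num, Real.rpow_one, Real.rpow_one] at h3
  have hfinal : θ ^ e + θ' ^ e - 2 * m ^ e ≤ L1 * (L2 * |θ ^ ((3:ℝ)/2) - θ' ^ ((3:ℝ)/2)|) :=
    le_trans hE (mul_le_mul_of_nonneg_left h3 hL1.le)
  calc ρ^2 * (4*π) ^ e * (θ ^ e + θ' ^ e - 2 * m ^ e)
      ≤ ρ^2 * (4*π) ^ e * (L1 * (L2 * |θ ^ ((3:ℝ)/2) - θ' ^ ((3:ℝ)/2)|)) := by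
        have h4 : (0:ℝ) ≤ ρ^2 * (4*π) ^ e := by positivity
        exact mul_le_mul_of_nonneg_left hfinal h4
    _ = (4*π) ^ e * L1 * L2 * ρ^2 * |θ ^ ((3:ℝ)/2) - θ' ^ ((3:ℝ)/2)| := by ring
end
end

section
/- Let f be a solution of the rescaled equation (at the stationary state level, an identity on moments): if F satisfies Q_α(F,F) + τΔF = 0 with ∫F = ρ, then integrating against |v|² yields (1−α²) b₁ ∫∫ F F_* |u|³ dv dv_* = 2Nτρ. In particular with τ = ρ(1−α) and α < 1 this gives (1+α) b₁ ∫∫ F F_* |u|³ dv dv_* = 2Nρ². -/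
open MeasureTheory Real

noncomputable section

namespace StationaryAux

open Metric Pointwise

set_option linter.unusedSectionVars false

variable {E : Type*} [NormedAddCommGroup E] [InnerProductSpace ℝ E]
  [FiniteDimensional ℝ E] [MeasurableSpace E] [BorelSpace E]

/-- The homeomorphism of the unit sphere induced by a linear isometry equivalence. -/
def sphMap (O : E ≃ₗᵢ[ℝ] E) : sphere (0 : E) 1 ≃ₜ sphere (0 : E) 1 :=
  O.toHomeomorph.subtype fun x => by
    simp [mem_sphere_zero_iff_norm]

lemma sphMap_coe (O : E ≃ₗᵢ[ℝ] E) (x : sphere (0 : E) 1) :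
    ((sphMap O x : sphere (0 : E) 1) : E) = O x := rfl

lemma coe_image_preimage (O : E ≃ₗᵢ[ℝ] E) (s : Set (sphere (0 : E) 1)) :
    ((↑) '' ((sphMap O) ⁻¹' s) : Set E) = O ⁻¹' ((↑) '' s) := by
  ext x
  simp only [Set.mem_image, Set.mem_preimage]
  constructor
  · rintro ⟨y, hy, rfl⟩
    exact ⟨sphMap O y, hy, rfl⟩
  · rintro ⟨z, hz, hzx⟩
    refine ⟨(sphMap O).symm z, ?_, ?_⟩
    · simpa using hz
    · have h1 : (((sphMap O).symm z : sphere (0:E) 1) : E) = O.symm z := rfl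
      rw [h1]
      exact O.symm_apply_eq.2 hzx

lemma smul_preimage (O : E ≃ₗᵢ[ℝ] E) (A : Set E) :
    Set.Ioo (0:ℝ) 1 • (O ⁻¹' A) = O ⁻¹' (Set.Ioo (0:ℝ) 1 • A) := by
  ext x
  simp only [Set.mem_smul, Set.mem_preimage]
  constructor
  · rintro ⟨r, hr, a, ha, rfl⟩
    exact ⟨r, hr, O a, ha, (O.map_smul r a).symm⟩
  · rintro ⟨r, hr, a, ha, h⟩
    refine ⟨r, hr, O.symm a, by simpa using ha, O.injective ?_⟩
    rw [O.map_smul]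
    simpa using h

lemma sphMap_measurePreserving (O : E ≃ₗᵢ[ℝ] E) (hO : MeasurePreserving O (volume : Measure E) volume) :
    MeasurePreserving (sphMap O) ((volume : Measure E).toSphere)
      ((volume : Measure E).toSphere) := by
  refine ⟨(sphMap O).measurable, ?_⟩
  ext s hs
  rw [Measure.map_apply (sphMap O).measurable hs,
    Measure.toSphere_apply' _ (hs.preimage (sphMap O).measurable),
    Measure.toSphere_apply' _ hs, coe_image_preimage, smul_preimage,
    hO.measure_preimage_emb (O.toHomeomorph.measurableEmbedding)]

lemma integral_sphere_comp (O : E ≃ₗᵢ[ℝ] E) (hO : MeasurePreserving O (volume : Measure E) volume)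
    (g : sphere (0 : E) 1 → ℝ) :
    ∫ σ, g (sphMap O σ) ∂(volume : Measure E).toSphere
      = ∫ σ, g σ ∂(volume : Measure E).toSphere :=
  (sphMap_measurePreserving O hO).integral_comp (sphMap O).measurableEmbedding g

lemma integral_inner_invariant (u e : E) (hu : ‖u‖ = 1) (he : ‖e‖ = 1) (f : ℝ → ℝ) :
    ∫ σ, f (inner ℝ u (σ : E)) ∂(volume : Measure E).toSphere
      = ∫ σ, f (inner ℝ e (σ : E)) ∂(volume : Measure E).toSphere := by
  set O : E ≃ₗᵢ[ℝ] E := Submodule.reflection (Submodule.span ℝ {e - u})ᗮ with hOdef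
  have hOe : O e = u := Submodule.reflection_sub (by rw [he, hu])
  have hO : MeasurePreserving O (volume : Measure E) volume := O.measurePreserving
  calc ∫ σ, f (inner ℝ u (σ : E)) ∂(volume : Measure E).toSphere
      = ∫ σ, f (inner ℝ u ((sphMap O σ : sphere (0:E) 1) : E)) ∂(volume : Measure E).toSphere :=
        (integral_sphere_comp O hO (fun σ => f (inner ℝ u (σ : E)))).symm
    _ = ∫ σ, f (inner ℝ e (σ : E)) ∂(volume : Measure E).toSphere := by
        have hfun : (fun σ : sphere (0:E) 1 => f (inner ℝ u ((sphMap O σ : sphere (0:E) 1) : E)))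
            = fun σ : sphere (0:E) 1 => f (inner ℝ e (σ : E)) := by
          funext σ
          rw [sphMap_coe, ← hOe, LinearIsometryEquiv.inner_map_map]
        rw [hfun]

end StationaryAux

open StationaryAux

/-- Integrating the stationary equation `Q_α(F,F) + τΔF = 0` against `|v|²`
yields the energy balance `(1−α²) b₁ ∬ F F_* |u|³ = 2Nτρ`; in particular with
`τ = ρ(1−α)` one gets `(1+α) b₁ ∬ F F_* |u|³ = 2Nρ²`. -/
theorem stationary_energy_balance
    (N : ℕ) (hN : 2 ≤ N)
    (α ρ τ : ℝ) (hα : α ∈ Set.Ico (0:ℝ) 1) (hρ : 0 < ρ)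
    (b : ℝ → ℝ) (b₁ : ℝ)
    (e : EuclideanSpace ℝ (Fin N)) (he : e = EuclideanSpace.single ⟨0, by omega⟩ 1)
    -- the angular momentum constant b₁ = (1/8)∫_{S^{N-1}} (1 - û·σ) b(û·σ) dσ
    (hb₁ : b₁ = (1/8) * ∫ σ, (1 - (inner ℝ e (σ : EuclideanSpace ℝ (Fin N)) : ℝ))
        * b (inner ℝ e (σ : EuclideanSpace ℝ (Fin N)))
        ∂((volume : Measure (EuclideanSpace ℝ (Fin N))).toSphere))
    (F G : EuclideanSpace ℝ (Fin N) → ℝ)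
    (hF0 : ∀ v, 0 ≤ F v)
    (hFint : Integrable F)
    (hmass : ∫ v, F v = ρ)
    -- integration by parts: ∫ (ΔF) |v|² dv = 2N ∫ F dv, with G = ΔF
    (hlap : ∫ v, G v * ‖v‖^2 = 2 * N * ρ)
    -- weak formulation of Q_α(F,F) + τ ΔF = 0 against ψ = |v|², using
    -- Δ_{|v|²} = -((1-α²)/4)(1 - û·σ)|u|²
    (hweak : (1/2) * (∫ v, ∫ w,
        (∫ σ, b (inner ℝ (‖v - w‖⁻¹ • (v - w)) (σ : EuclideanSpace ℝ (Fin N)))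
            * ‖v - w‖ * F w * F v
            * (-((1 - α^2)/4)
                * (1 - (inner ℝ (‖v - w‖⁻¹ • (v - w)) (σ : EuclideanSpace ℝ (Fin N)) : ℝ))
                * ‖v - w‖^2)
          ∂((volume : Measure (EuclideanSpace ℝ (Fin N))).toSphere)))
        + τ * ∫ v, G v * ‖v‖^2 = 0) :
    (1 - α^2) * b₁ * (∫ v, ∫ w, F v * F w * ‖v - w‖^3) = 2 * N * τ * ρ ∧
    (τ = ρ * (1 - α) →
      (1 + α) * b₁ * (∫ v, ∫ w, F v * F w * ‖v - w‖^3) = 2 * N * ρ^2) := by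
  obtain ⟨hα0, hα1⟩ := hα
  have he1 : ‖e‖ = 1 := by rw [he]; simp [EuclideanSpace.norm_single]
  set μS := (volume : Measure (EuclideanSpace ℝ (Fin N))).toSphere with hμS
  set K := ∫ σ, (1 - (inner ℝ e (σ : EuclideanSpace ℝ (Fin N)) : ℝ))
      * b (inner ℝ e (σ : EuclideanSpace ℝ (Fin N))) ∂μS with hK
  have key : ∀ v w : EuclideanSpace ℝ (Fin N),
      (∫ σ, b (inner ℝ (‖v - w‖⁻¹ • (v - w)) (σ : EuclideanSpace ℝ (Fin N)))
            * ‖v - w‖ * F w * F v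
            * (-((1 - α^2)/4)
                * (1 - (inner ℝ (‖v - w‖⁻¹ • (v - w)) (σ : EuclideanSpace ℝ (Fin N)) : ℝ))
                * ‖v - w‖^2) ∂μS)
        = (-((1 - α^2)/4) * K) * (F v * F w * ‖v - w‖^3) := by
    intro v w
    by_cases hvw : v = w
    · simp [hvw]
    · have hne : v - w ≠ 0 := sub_ne_zero.2 hvw
      have hu1 : ‖‖v - w‖⁻¹ • (v - w)‖ = 1 := norm_smul_inv_norm hne
      have h1 : ∀ σ : Metric.sphere (0 : EuclideanSpace ℝ (Fin N)) 1,
          b (inner ℝ (‖v - w‖⁻¹ • (v - w)) (σ : EuclideanSpace ℝ (Fin N)))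
            * ‖v - w‖ * F w * F v
            * (-((1 - α^2)/4)
                * (1 - (inner ℝ (‖v - w‖⁻¹ • (v - w)) (σ : EuclideanSpace ℝ (Fin N)) : ℝ))
                * ‖v - w‖^2)
          = (-((1 - α^2)/4) * (F v * F w * ‖v - w‖^3))
              * ((1 - (inner ℝ (‖v - w‖⁻¹ • (v - w)) (σ : EuclideanSpace ℝ (Fin N)) : ℝ))
                * b (inner ℝ (‖v - w‖⁻¹ • (v - w)) (σ : EuclideanSpace ℝ (Fin N)))) := by
        intro σ; ring
      simp_rw [h1]
      rw [integral_const_mul]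
      have h2 : ∫ σ, (1 - (inner ℝ (‖v - w‖⁻¹ • (v - w)) (σ : EuclideanSpace ℝ (Fin N)) : ℝ))
            * b (inner ℝ (‖v - w‖⁻¹ • (v - w)) (σ : EuclideanSpace ℝ (Fin N))) ∂μS = K :=
        integral_inner_invariant _ e hu1 he1 (fun t => (1 - t) * b t)
      rw [h2]; ring
  simp_rw [key, integral_const_mul] at hweak
  rw [hlap] at hweak
  have h3 : (1 - α^2) * b₁ * (∫ v, ∫ w, F v * F w * ‖v - w‖^3) = 2 * N * τ * ρ := by
    rw [hb₁]
    linear_combination (-1 : ℝ) * hweak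
  refine ⟨h3, fun hτ => ?_⟩
  have hne1 : (1:ℝ) - α ≠ 0 := (sub_pos.2 hα1).ne'
  refine mul_left_cancel₀ hne1 ?_
  rw [hτ] at h3
  linear_combination h3
end
end
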